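/- arXiv:0906.5097 — 3 statements merged into one kernel-verified Lean document; each statement's English description precedes it below -/
import Mathlib

section
/- Let $A_1, \ldots, A_p$ be bounded convex polytopes in a $(p+q)$-dimensional real vector space $P$, and let $B_1, \ldots, B_q$ be bounded convex polytopes contained in a $q$-dimensional linear subspace $Q \subseteq P$. Let $\pi : P \to P/Q$ denote the quotient projection. Then $(p+q)!\,\mathrm{Vol}_{p+q}(A_1,\ldots,A_p,B_1,\ldots,B_q) = p!\,q!\,\mathrm{Vol}_p(\pi A_1,\ldots,\pi A_p)\cdot \mathrm{Vol}_q(B_1,\ldots,B_q)$, where the volume forms on $P$, $Q$, and $P/Q$ are chosen compatibly. -/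
/-!
By polarization, `m! Vol(C₁,…,Cₘ) = ∑_S (-1)^{m-|S|} vol(K + ∑_{i∈S} Cᵢ)` for every convex body
`K`: expanding `vol(K + ∑_{i∈S} Cᵢ) = Vol(K + ∑_{i∈S} Cᵢ, …)` by multilinearity, only the terms
using every `Cᵢ` exactly once survive the alternating sum.

Apply this to all `p + q` bodies and split the sum over `S` into an `A`-part `S₁` and a `B`-part
`S₂`. For fixed `X = ∑_{i∈S₁} Aᵢ`, the slice of `X + {0} × ∑_{j∈S₂} Bⱼ` over `x` is
`X_x + ∑_{j∈S₂} Bⱼ`, and it is empty for `x ∉ πX`. So by Fubini and polarization in `Q` (with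
base body `X_x`) the inner alternating sum is `q! Vol(B) · vol(πX)`, and the outer one is then
polarization in `P/Q` for `πA₁,…,πA_p`.
-/

open Pointwise MeasureTheory Finset

/-- `MV` is the mixed volume of bounded convex bodies:
symmetric, Minkowski-additive in each argument, with diagonal values the volume. -/
def IsMixedVolume {E : Type*} [NormedAddCommGroup E] [NormedSpace ℝ E] [MeasureSpace E]
    {m : ℕ} (MV : (Fin m → Set E) → ℝ) : Prop :=
  (∀ (σ : Equiv.Perm (Fin m)) (C : Fin m → Set E), MV (C ∘ σ) = MV C) ∧
  (∀ (C : Fin m → Set E) (i : Fin m) (D D' : Set E),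
      (∀ j, Convex ℝ (C j) ∧ IsCompact (C j) ∧ (C j).Nonempty) →
      Convex ℝ D → IsCompact D → D.Nonempty →
      Convex ℝ D' → IsCompact D' → D'.Nonempty →
      MV (Function.update C i (D + D')) =
        MV (Function.update C i D) + MV (Function.update C i D')) ∧
  (∀ C : Set E, Convex ℝ C → IsCompact C → C.Nonempty →
      MV (fun _ => C) = (volume C).toReal)

section MixedDifference

variable {ι κ V : Type*} [Fintype ι] [DecidableEq ι] [Fintype κ] [DecidableEq κ]
  [AddCommMonoid V]

/-- The iterated difference `(Δ_{C i₁} ⋯ Δ_{C iₘ} f) 0`, where `(Δ_c f) X = f (X + c) - f X`. -/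
def mixedDifference (f : V → ℝ) (C : ι → V) : ℝ :=
  ∑ S : Finset ι, (-1) ^ #Sᶜ * f (∑ i ∈ S, C i)

theorem mixedDifference_const_mul (c : ℝ) (f : V → ℝ) (C : ι → V) :
    mixedDifference (fun X => c * f X) C = c * mixedDifference f C := by
  simp only [mixedDifference, mul_sum, mul_left_comm]

theorem mixedDifference_comp_addMonoidHom {W : Type*} [AddCommMonoid W] (f : W → ℝ) (g : V →+ W)
    (C : ι → V) : mixedDifference (f ∘ g) C = mixedDifference f (g ∘ C) := by
  simp only [mixedDifference, Function.comp_apply, map_sum]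

theorem mixedDifference_comp_equiv (f : V → ℝ) (C : ι → V) (e : κ ≃ ι) :
    mixedDifference f (C ∘ e) = mixedDifference f C := by
  refine Fintype.sum_equiv e.finsetCongr _ _ fun S => ?_
  rw [Equiv.finsetCongr_apply, sum_map, card_compl, card_compl, card_map, Fintype.card_congr e]
  rfl

theorem mixedDifference_sumElim (f : V → ℝ) (C : ι → V) (D : κ → V) :
    mixedDifference f (Sum.elim C D) =
      mixedDifference (fun X => mixedDifference (fun Y => f (X + Y)) D) C := by
  simp only [mixedDifference, mul_sum, ← Fintype.sum_prod_type']
  refine Fintype.sum_equiv Finset.sumEquiv.toEquiv _ _ fun S => ?_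
  obtain ⟨S, rfl⟩ := Finset.sumEquiv.symm.surjective S
  have compl_disjSum : (S.1.disjSum S.2)ᶜ = S.1ᶜ.disjSum S.2ᶜ := by ext (i | j) <;> simp
  simp [compl_disjSum, pow_add, mul_assoc]

theorem integral_mixedDifference {α : Type*} [MeasurableSpace α] {μ : Measure α}
    (f : α → V → ℝ) (C : ι → V) (hf : ∀ X, Integrable (f · X) μ) :
    ∫ x, mixedDifference (f x) C ∂μ = mixedDifference (fun X => ∫ x, f x X ∂μ) C := by
  simp only [mixedDifference]
  rw [integral_finsetSum _ fun S _ => (hf _).const_mul _]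
  simp only [integral_const_mul]

theorem sum_neg_one_pow_card_compl_of_subset (T : Finset ι) :
    ∑ S with T ⊆ S, (-1 : ℝ) ^ #Sᶜ = if T = univ then 1 else 0 := by
  have h : ∑ S with T ⊆ S, (-1 : ℝ) ^ #Sᶜ = ∑ U ∈ Tᶜ.powerset, (-1 : ℝ) ^ #U :=
    sum_nbij' compl compl (by simp) (by simp [subset_compl_comm]) (by simp) (by simp) (by simp)
  have h' := sum_powerset_neg_one_pow_card (x := Tᶜ)
  simp only [compl_eq_empty_iff] at h'
  rw [h]
  exact_mod_cast h'

omit [Fintype ι] [DecidableEq ι] in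
theorem exists_perm_of_forall_exists_eq_some [Finite ι] {r : ι → Option ι}
    (hr : ∀ j, ∃ i, r i = some j) : ∃ σ : Equiv.Perm ι, r = some ∘ σ := by
  choose c hc using hr
  have hc_inj : Function.Injective c := fun j j' hjj' => Option.some_injective _ <| by
    rw [← hc, ← hc, hjj']
  have hc_bij := Finite.injective_iff_bijective.mp hc_inj
  refine ⟨(Equiv.ofBijective c hc_bij).symm, funext fun i => ?_⟩
  obtain ⟨j, rfl⟩ := hc_bij.2 i
  simp [hc]

theorem MultilinearMap.mixedDifference_add_diag
    (M : MultilinearMap ℕ (fun _ : ι => V) ℝ) (K : V) (C : ι → V) :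
    mixedDifference (fun X => M fun _ => K + X) C = ∑ σ : Equiv.Perm ι, M (C ∘ σ) := by
  set F : (ι → Option ι) → ℝ := fun r => M fun i => (r i).elim K C
  set T : (ι → Option ι) → Finset ι := fun r => {j | ∃ i, r i = some j}
  have expand (S : Finset ι) :
      (M fun _ => K + ∑ i ∈ S, C i) = ∑ r ∈ Fintype.piFinset fun _ => S.insertNone, F r := by
    simp only [add_sum_eq_sum_insertNone, M.map_sum_finset, F]
  have mem_piFinset (r : ι → Option ι) (S : Finset ι) :
      r ∈ Fintype.piFinset (fun _ => S.insertNone) ↔ T r ⊆ S := by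
    simpa [T, subset_iff, mem_insertNone] using forall_comm
  -- only the `r` hitting every `some j` survive the alternating sum, and those are permutations
  calc mixedDifference (fun X => M fun _ => K + X) C
      = ∑ S : Finset ι, ∑ r ∈ Fintype.piFinset fun _ => S.insertNone, (-1) ^ #Sᶜ * F r := by
        simp only [mixedDifference, expand, mul_sum]
    _ = ∑ r : ι → Option ι, ∑ S with T r ⊆ S, (-1) ^ #Sᶜ * F r :=
        sum_comm' fun S r => by simp [mem_piFinset]
    _ = ∑ r with T r = univ, F r := by
        simp only [← sum_mul, sum_neg_one_pow_card_compl_of_subset, ite_mul, one_mul, zero_mul,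
          sum_ite, sum_const_zero, add_zero]
    _ = ∑ σ : Equiv.Perm ι, M (C ∘ σ) := by
        refine (sum_bij (fun (σ : Equiv.Perm ι) _ => (some ∘ σ : ι → Option ι))
          (fun σ _ => ?_) (fun σ _ τ _ hστ => ?_) (fun r hr => ?_) fun σ _ => rfl).symm
        · simpa [T, eq_univ_iff_forall] using fun j => ⟨σ.symm j, by simp⟩
        · exact Equiv.ext fun i => Option.some_injective _ (congrFun hστ i)
        · simp only [T, mem_filter, eq_univ_iff_forall, mem_univ, true_and] at hr
          obtain ⟨σ, rfl⟩ := exists_perm_of_forall_exists_eq_some hr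
          exact ⟨σ, mem_univ _, rfl⟩

end MixedDifference

namespace ConvexBody

variable {V W : Type*} [TopologicalSpace V] [AddCommGroup V] [Module ℝ V]
  [TopologicalSpace W] [AddCommGroup W] [Module ℝ W]

noncomputable def map [ContinuousAdd V] [ContinuousAdd W] (f : V →L[ℝ] W) :
    ConvexBody V →+ ConvexBody W where
  toFun K := ⟨f '' K, K.convex.linear_image f.toLinearMap, K.isCompact.image f.continuous,
    K.nonempty.image f⟩
  map_zero' := ConvexBody.ext <| by simp [Set.singleton_zero]
  map_add' K L := ConvexBody.ext <| Set.image_add f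

@[simp]
theorem coe_map [ContinuousAdd V] [ContinuousAdd W] (f : V →L[ℝ] W) (K : ConvexBody V) :
    (map f K : Set W) = f '' K := rfl

theorem exists_coe_eq_mk_preimage [T2Space V] [T2Space W] (K : ConvexBody (V × W)) {x : V}
    (hx : x ∈ Prod.fst '' (K : Set (V × W))) :
    ∃ L : ConvexBody W, (L : Set W) = Prod.mk x ⁻¹' K := by
  obtain ⟨z, hz, rfl⟩ := hx
  refine ⟨⟨Prod.mk z.1 ⁻¹' K, ?_, ?_, ⟨z.2, hz⟩⟩, rfl⟩
  · exact K.convex.affine_preimage ((AffineMap.const ℝ W z.1).prod (AffineMap.id ℝ W))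
  · exact (K.isCompact.image continuous_snd).of_isClosed_subset
      (K.isClosed.preimage (Continuous.prodMk_right z.1)) fun y hy => ⟨(z.1, y), hy, rfl⟩

end ConvexBody

theorem Set.mk_preimage_add_mk_zero_image {α β : Type*} [AddMonoid α] [AddMonoid β]
    (s : Set (α × β)) (t : Set β) (x : α) :
    Prod.mk x ⁻¹' (s + Prod.mk 0 '' t) = Prod.mk x ⁻¹' s + t := by
  ext y
  simp only [Set.mem_preimage, Set.mem_add, Set.mem_image]
  constructor
  · rintro ⟨a, ha, _, ⟨b, hb, rfl⟩, hab⟩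
    obtain ⟨rfl, rfl⟩ := Prod.ext_iff.mp hab
    exact ⟨a.2, by simpa using ha, b, hb, rfl⟩
  · rintro ⟨a, ha, b, hb, rfl⟩
    exact ⟨(x, a), ha, (0, b), ⟨b, hb, rfl⟩, by simp⟩

theorem Set.mk_preimage_eq_empty {α β : Type*} {s : Set (α × β)} {x : α}
    (hx : x ∉ Prod.fst '' s) : Prod.mk x ⁻¹' s = ∅ :=
  Set.eq_empty_of_forall_notMem fun y hy => hx ⟨(x, y), hy, rfl⟩

theorem MeasureTheory.Measure.toReal_prod_apply {α β : Type*} [MeasurableSpace α]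
    [MeasurableSpace β] {μ : Measure α} {ν : Measure β} [SFinite ν] {s : Set (α × β)}
    (hs : MeasurableSet s) (h : μ.prod ν s ≠ ⊤) :
    (μ.prod ν s).toReal = ∫ x, (ν (Prod.mk x ⁻¹' s)).toReal ∂μ := by
  rw [integral_toReal (measurable_measure_prodMk_left hs).aemeasurable
    (ae_measure_lt_top hs h), prod_apply hs]

namespace IsMixedVolume

section

variable {E : Type*} [NormedAddCommGroup E] [NormedSpace ℝ E] [MeasureSpace E]
  {m : ℕ} {MV : (Fin m → Set E) → ℝ}

theorem map_update_add (h : IsMixedVolume MV) [DecidableEq (Fin m)] (C : Fin m → ConvexBody E)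
    (i : Fin m) (D D' : ConvexBody E) :
    MV ((↑) ∘ Function.update C i (D + D')) =
      MV ((↑) ∘ Function.update C i D) + MV ((↑) ∘ Function.update C i D') := by
  simp only [Function.comp_update, ConvexBody.coe_add]
  convert h.2.1 _ i _ _ (fun j => ⟨(C j).convex, (C j).isCompact, (C j).nonempty⟩)
    D.convex D.isCompact D.nonempty D'.convex D'.isCompact D'.nonempty <;> rfl

noncomputable def toMultilinearMap (h : IsMixedVolume MV) :
    MultilinearMap ℕ (fun _ : Fin m => ConvexBody E) ℝ where
  toFun C := MV (((↑) : ConvexBody E → Set E) ∘ C)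
  map_update_add' := h.map_update_add
  map_update_smul' C i n D :=
    (AddMonoidHom.mk' (fun D => MV (((↑) : ConvexBody E → Set E) ∘ Function.update C i D))
      (h.map_update_add C i)).map_nsmul n D

theorem mixedDifference_volume_add (h : IsMixedVolume MV) (K : ConvexBody E)
    (C : Fin m → ConvexBody E) :
    mixedDifference (fun X : ConvexBody E => (volume ((K + X : ConvexBody E) : Set E)).toReal) C =
      m.factorial * MV ((↑) ∘ C) := by
  have diag (X : ConvexBody E) : (volume (X : Set E)).toReal = h.toMultilinearMap fun _ => X :=
    (h.2.2 X X.convex X.isCompact X.nonempty).symm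
  have perm_invariant (σ : Equiv.Perm (Fin m)) : h.toMultilinearMap (C ∘ σ) = MV ((↑) ∘ C) :=
    h.1 σ (SetLike.coe ∘ C)
  simp only [diag, h.toMultilinearMap.mixedDifference_add_diag, perm_invariant, sum_const,
    card_univ, Fintype.card_perm, Fintype.card_fin, nsmul_eq_mul]

theorem mixedDifference_volume (h : IsMixedVolume MV) (C : Fin m → ConvexBody E) :
    mixedDifference (fun X : ConvexBody E => (volume (X : Set E)).toReal) C =
      m.factorial * MV ((↑) ∘ C) := by
  simpa using h.mixedDifference_volume_add 0 C

end

variable {E F : Type*} [NormedAddCommGroup E] [NormedSpace ℝ E] [NormedAddCommGroup F]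
  [NormedSpace ℝ F] [MeasureSpace F] {q : ℕ} {MV : (Fin q → Set F) → ℝ}

theorem mixedDifference_volume_mk_preimage_add (h : IsMixedVolume MV) (K : ConvexBody (E × F))
    (B : Fin q → ConvexBody F) (x : E) :
    mixedDifference (fun L : ConvexBody F =>
        (volume (Prod.mk x ⁻¹' (K : Set (E × F)) + (L : Set F))).toReal) B =
      (Prod.fst '' (K : Set (E × F))).indicator (fun _ => q.factorial * MV ((↑) ∘ B)) x := by
  by_cases hx : x ∈ Prod.fst '' (K : Set (E × F))
  · obtain ⟨Kx, hKx⟩ := K.exists_coe_eq_mk_preimage hx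
    rw [Set.indicator_of_mem hx, ← h.mixedDifference_volume_add Kx B]
    simp [hKx]
  · simp [Set.indicator_of_notMem hx, mixedDifference, Set.mk_preimage_eq_empty hx]

variable [MeasureSpace E] [BorelSpace E] [(volume : Measure E).IsAddHaarMeasure]
  [FiniteDimensional ℝ F] [BorelSpace F] [(volume : Measure F).IsAddHaarMeasure]

theorem mixedDifference_volume_add_map_inr (h : IsMixedVolume MV) (K : ConvexBody (E × F))
    (B : Fin q → ConvexBody F) :
    mixedDifference (fun L => (volume
        ((K + ConvexBody.map (ContinuousLinearMap.inr ℝ E F) L : ConvexBody (E × F)) :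
          Set (E × F))).toReal) B =
      q.factorial * MV ((↑) ∘ B) *
        (volume (ConvexBody.map (ContinuousLinearMap.fst ℝ E F) K : Set E)).toReal := by
  set slice : E → ConvexBody F → ℝ := fun x L =>
    (volume (Prod.mk x ⁻¹' (K : Set (E × F)) + (L : Set F))).toReal
  have hKL (L : ConvexBody F) := (K + ConvexBody.map (ContinuousLinearMap.inr ℝ E F) L).isCompact
  have slice_eq (x : E) (L : ConvexBody F) : slice x L = (volume (Prod.mk x ⁻¹'
      ((K + ConvexBody.map (ContinuousLinearMap.inr ℝ E F) L : ConvexBody (E × F)) :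
        Set (E × F)))).toReal := by
    have inr_eq : ⇑(ContinuousLinearMap.inr ℝ E F) = Prod.mk 0 := rfl
    simp [slice, inr_eq, Set.mk_preimage_add_mk_zero_image]
  have volume_eq_integral (L : ConvexBody F) :
      (volume ((K + ConvexBody.map (ContinuousLinearMap.inr ℝ E F) L : ConvexBody (E × F)) :
        Set (E × F))).toReal = ∫ x, slice x L := by
    rw [Measure.volume_eq_prod]
    simp only [slice_eq,
      Measure.toReal_prod_apply (hKL L).measurableSet (hKL L).measure_lt_top.ne]
  have slice_integrable (L : ConvexBody F) : Integrable (slice · L) := by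
    simp only [slice_eq]
    exact Measure.integrable_measure_prodMk_left (hKL L).measurableSet (hKL L).measure_lt_top.ne
  simp only [volume_eq_integral, ← integral_mixedDifference _ _ slice_integrable, slice,
    h.mixedDifference_volume_mk_preimage_add]
  rw [integral_indicator_const _ (K.isCompact.image continuous_fst).measurableSet, smul_eq_mul,
    mul_comm, measureReal_def]
  rfl

end IsMixedVolume

/-- Here `P = ℝᵖ × ℝ^q`, `Q = {0} × ℝ^q` and `π = Prod.fst`, which identifies `P/Q` with `ℝᵖ`
compatibly with the volume forms. -/
theorem stmt2_general (p q : ℕ)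
    (A : Fin p → Set ((Fin p → ℝ) × (Fin q → ℝ)))
    (B : Fin q → Set (Fin q → ℝ))
    (hA : ∀ i, Convex ℝ (A i) ∧ IsCompact (A i) ∧ (A i).Nonempty)
    (hB : ∀ j, Convex ℝ (B j) ∧ IsCompact (B j) ∧ (B j).Nonempty)
    (MVpq : (Fin (p + q) → Set ((Fin p → ℝ) × (Fin q → ℝ))) → ℝ)
    (hMVpq : IsMixedVolume MVpq)
    (MVp : (Fin p → Set (Fin p → ℝ)) → ℝ) (hMVp : IsMixedVolume MVp)
    (MVq : (Fin q → Set (Fin q → ℝ)) → ℝ) (hMVq : IsMixedVolume MVq) :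
    ((p + q).factorial : ℝ) *
        MVpq (Fin.append A (fun j => ({0} : Set (Fin p → ℝ)) ×ˢ B j))
      = (p.factorial : ℝ) * (q.factorial : ℝ) *
          MVp (fun i => Prod.fst '' A i) * MVq B := by
  let CA i : ConvexBody ((Fin p → ℝ) × (Fin q → ℝ)) := ⟨A i, (hA i).1, (hA i).2.1, (hA i).2.2⟩
  let CB j : ConvexBody (Fin q → ℝ) := ⟨B j, (hB j).1, (hB j).2.1, (hB j).2.2⟩
  let inr := ConvexBody.map (ContinuousLinearMap.inr ℝ (Fin p → ℝ) (Fin q → ℝ))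
  let fst := ConvexBody.map (ContinuousLinearMap.fst ℝ (Fin p → ℝ) (Fin q → ℝ))
  have hAB : Fin.append A (fun j => ({0} : Set (Fin p → ℝ)) ×ˢ B j) =
      (↑) ∘ Fin.append CA (inr ∘ CB) := by
    funext i
    refine Fin.addCases (fun i => ?_) (fun j => ?_) i
    · simp [CA]
    · simp only [Function.comp_apply, Fin.append_right]
      exact Set.singleton_prod
  calc ((p + q).factorial : ℝ) * MVpq (Fin.append A fun j => {0} ×ˢ B j)
      = mixedDifference (fun X => (volume (SetLike.coe X)).toReal)
          (Fin.append CA (inr ∘ CB)) := by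
        rw [hAB, hMVpq.mixedDifference_volume]
    _ = mixedDifference (fun X => (volume (SetLike.coe X)).toReal)
          (Sum.elim CA (inr ∘ CB)) := by
        rw [← Fin.append_comp_sumElim]
        exact (mixedDifference_comp_equiv _ _ finSumFinEquiv).symm
    _ = q.factorial * MVq B *
          mixedDifference (fun X => (volume (SetLike.coe X)).toReal) (fst ∘ CA) := by
        rw [mixedDifference_sumElim, ← mixedDifference_comp_addMonoidHom _ fst,
          ← mixedDifference_const_mul]
        congr 1
        funext X
        rw [← mixedDifference_comp_addMonoidHom]
        exact hMVq.mixedDifference_volume_add_map_inr X CB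
    _ = p.factorial * q.factorial * MVp (fun i => Prod.fst '' A i) * MVq B := by
        have hπA : (fun i => Prod.fst '' A i) = (↑) ∘ fst ∘ CA := rfl
        rw [hMVp.mixedDifference_volume, hπA]
        ring

/-- **Mixed volumes of polytopes lying in a subspace** (Lemma 1.6).
Realize `P = ℝᵖ × ℝ^q`, `Q = {0} × ℝ^q`, and `π = Prod.fst : P → P/Q ≅ ℝᵖ`
(a compatible choice of volume forms). For bounded convex polytopes
`A₁,…,A_p ⊆ P` and `B₁,…,B_q ⊆ ℝ^q` (viewed in `Q` as `{0} × B_j`),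
`(p+q)! Vol(A₁,…,A_p,B₁,…,B_q) = p! q! Vol(πA₁,…,πA_p) · Vol(B₁,…,B_q)`. -/
theorem stmt2 (p q : ℕ)
    (A : Fin p → Set ((Fin p → ℝ) × (Fin q → ℝ)))
    (B : Fin q → Set (Fin q → ℝ))
    (hA : ∀ i, Convex ℝ (A i) ∧ IsCompact (A i) ∧ (A i).Nonempty)
    (hApoly : ∀ i, ∃ V : Finset ((Fin p → ℝ) × (Fin q → ℝ)),
      A i = convexHull ℝ (V : Set ((Fin p → ℝ) × (Fin q → ℝ))))
    (hB : ∀ j, Convex ℝ (B j) ∧ IsCompact (B j) ∧ (B j).Nonempty)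
    (hBpoly : ∀ j, ∃ V : Finset (Fin q → ℝ), B j = convexHull ℝ (V : Set (Fin q → ℝ)))
    (MVpq : (Fin (p + q) → Set ((Fin p → ℝ) × (Fin q → ℝ))) → ℝ)
    (hMVpq : IsMixedVolume MVpq)
    (MVp : (Fin p → Set (Fin p → ℝ)) → ℝ) (hMVp : IsMixedVolume MVp)
    (MVq : (Fin q → Set (Fin q → ℝ)) → ℝ) (hMVq : IsMixedVolume MVq) :
    ((p + q).factorial : ℝ) *
        MVpq (Fin.append A (fun j => ({0} : Set (Fin p → ℝ)) ×ˢ B j))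
      = (p.factorial : ℝ) * (q.factorial : ℝ) *
          MVp (fun i => Prod.fst '' A i) * MVq B :=
  stmt2_general p q A B hA hB MVpq hMVpq MVp hMVp MVq hMVq
end

section
/- Let $S \subset \mathbb{R}^q$ be the standard $q$-dimensional simplex $\mathrm{conv}\{0, e_1, \ldots, e_q\}$. Let $l_1, \ldots, l_p$ be affine linear functions on $S$, with graphs $\Gamma_i = \{(x, l_i(x)) : x \in S\} \subset \mathbb{R}^q \times \mathbb{R}$. Let $l : pS \to \mathbb{R}$ be the maximal piecewise-linear concave function whose graph is contained in the upper boundary of the Minkowski sum $\Gamma_1 + \cdots + \Gamma_p$; equivalently, $l(x) = \max\{l_1(x_1) + \cdots + l_p(x_p) : x_i \in S, \ x_1 + \cdots + x_p = x\}$. Then for every lattice point $a \in pS \cap \mathbb{Z}^q$, $l(a) = \max\{ l_1(c_1) + \cdots + l_p(c_p) : c_i \text{ is a vertex of } S, \ c_1 + \cdots + c_p = a \}$. In other words, the maximum in the sup-convolution at a lattice point is attained with all $x_i$ vertices of $S$. -/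
open Finset

/-- The standard `q`-dimensional simplex `conv{0, e₁, …, e_q} ⊆ ℝ^q`. -/
def stdSimp (q : ℕ) : Set (Fin q → ℝ) := {x | (∀ j, 0 ≤ x j) ∧ ∑ j, x j ≤ 1}

/-- The vertices `0, e₁, …, e_q` of the standard simplex. -/
def stdSimpVertices (q : ℕ) : Set (Fin q → ℝ) :=
  insert (0 : Fin q → ℝ) (Set.range fun j : Fin q => Pi.single j (1 : ℝ))

/-- Given multiplicities `n : K → ℕ` summing to `p`, there is a map `Fin p → K`
whose fibers have exactly the prescribed cardinalities. -/
lemma exists_fiber_card {K : Type*} [Fintype K] [DecidableEq K] (n : K → ℕ) (p : ℕ)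
    (h : ∑ k, n k = p) :
    ∃ g : Fin p → K, ∀ k, (Finset.univ.filter fun i => g i = k).card = n k := by
  have hcard : Fintype.card (Σ k : K, Fin (n k)) = p := by
    simp [Fintype.card_sigma, h]
  let e : (Σ k : K, Fin (n k)) ≃ Fin p := Fintype.equivFinOfCardEq hcard
  refine ⟨fun i => (e.symm i).1, fun k => ?_⟩
  have h1 : (Finset.univ.filter fun i : Fin p => (e.symm i).1 = k).card
      = Fintype.card {i : Fin p // (e.symm i).1 = k} := (Fintype.card_subtype _).symm
  rw [h1]
  have e2 : {i : Fin p // (e.symm i).1 = k} ≃ {s : Σ k' : K, Fin (n k') // s.1 = k} :=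
    (e.symm).subtypeEquiv fun i => Iff.rfl
  have e3 : Fin (n k) ≃ {s : Σ k' : K, Fin (n k') // s.1 = k} := by
    refine Equiv.ofBijective (fun x => ⟨⟨k, x⟩, rfl⟩) ⟨?_, ?_⟩
    · intro x y hxy
      simpa using hxy
    · rintro ⟨⟨k', x⟩, hk'⟩
      dsimp at hk'
      subst hk'
      exact ⟨x, rfl⟩
  rw [Fintype.card_congr (e2.trans e3.symm), Fintype.card_fin]

/-- **Corollary 3.14.** For affine linear functions `l₁, …, l_p` on the standard
simplex `S ⊆ ℝ^q` and a lattice point `a` of the dilate `pS`, the sup-convolution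
`l(a) = max{∑ lᵢ(xᵢ) : xᵢ ∈ S, ∑ xᵢ = a}` is attained with all `xᵢ` vertices of `S`:
there are vertices `c₁, …, c_p` of `S` with `∑ cᵢ = a` realizing the maximum. -/
theorem stmt8 (q p : ℕ) (hp : 0 < p)
    (l : Fin p → ((Fin q → ℝ) →ᵃ[ℝ] ℝ))
    (a : Fin q → ℤ)
    (ha : (∀ j, (0 : ℝ) ≤ (a j : ℝ)) ∧ ∑ j, ((a j : ℝ)) ≤ (p : ℝ)) :
    ∃ c : Fin p → (Fin q → ℝ),
      (∀ i, c i ∈ stdSimpVertices q) ∧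
      (∑ i, c i) = (fun j => ((a j : ℝ))) ∧
      ∀ x : Fin p → (Fin q → ℝ), (∀ i, x i ∈ stdSimp q) →
        (∑ i, x i) = (fun j => ((a j : ℝ))) →
        ∑ i, l i (x i) ≤ ∑ i, l i (c i) := by
  classical
  obtain ⟨ha1, ha2⟩ := ha
  -- integer data
  set b : Fin q → ℕ := fun j => (a j).toNat with hb
  have hab : ∀ j, ((a j : ℝ)) = (b j : ℝ) := by
    intro j
    have h0 : 0 ≤ a j := by exact_mod_cast ha1 j
    have := Int.toNat_of_nonneg h0
    simp only [hb]
    exact_mod_cast this.symm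
  have hsum_le : ∑ j, b j ≤ p := by
    have : ((∑ j, b j : ℕ) : ℝ) ≤ (p : ℝ) := by
      push_cast
      calc (∑ j, (b j : ℝ)) = ∑ j, (a j : ℝ) := by
            refine Finset.sum_congr rfl fun j _ => (hab j).symm
        _ ≤ p := ha2
    exact_mod_cast this
  -- columns : Option (Fin q); `none` is the vertex 0, `some j` is the vertex `e_j`
  set V : Option (Fin q) → (Fin q → ℝ) := fun k => k.elim 0 (fun j => Pi.single j 1) with hV
  set n : Option (Fin q) → ℕ := fun k => k.elim (p - ∑ j, b j) b with hn
  have hVmem : ∀ k, V k ∈ stdSimpVertices q := by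
    rintro (_ | j)
    · exact Set.mem_insert _ _
    · exact Set.mem_insert_of_mem _ ⟨j, rfl⟩
  have hnsum : ∑ k, n k = p := by
    rw [Fintype.sum_option]
    simp [hn, Nat.sub_add_cancel hsum_le]
  obtain ⟨g, hg⟩ := exists_fiber_card n p hnsum
  have hgpos : ∀ t : Fin p, 0 < n (g t) := by
    intro t
    rw [← hg (g t)]
    exact Finset.card_pos.2 ⟨t, by simp⟩
  -- the matrix of values of the affine functions at the vertices
  set M : Fin p → Option (Fin q) → ℝ := fun i k => l i (V k) with hM
  -- choose the best permutation of the slots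
  obtain ⟨σ₀, -, hσ₀⟩ := Finset.exists_max_image (Finset.univ : Finset (Equiv.Perm (Fin p)))
    (fun σ => ∑ i, M i (g (σ i))) ⟨1, Finset.mem_univ 1⟩
  refine ⟨fun i => V (g (σ₀ i)), fun i => hVmem _, ?_, ?_⟩
  · -- the chosen vertices sum to `a`
    funext j
    have h1 : (∑ i, V (g (σ₀ i))) j = ∑ i, V (g (σ₀ i)) j := by
      simp [Finset.sum_apply]
    rw [h1, Equiv.sum_comp σ₀ (fun i => V (g i) j)]
    rw [← Finset.sum_fiberwise' Finset.univ g (fun k => V k j)]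
    have h2 : ∀ k, ∑ _i ∈ Finset.univ.filter fun i => g i = k, V k j = (n k : ℝ) * V k j := by
      intro k
      rw [Finset.sum_const, hg k, nsmul_eq_mul]
    rw [Finset.sum_congr rfl fun k _ => h2 k, Fintype.sum_option]
    simp [hV, Pi.single_apply, mul_ite, hn, (hab j).symm]
  · -- the main inequality
    intro x hx hxs
    -- barycentric coordinates of each `x i`
    set lam : Fin p → Option (Fin q) → ℝ :=
      fun i k => k.elim (1 - ∑ j, x i j) (fun j => x i j) with hlam
    have hl0 : ∀ i k, 0 ≤ lam i k := by
      rintro i (_ | j)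
      · exact sub_nonneg.2 (hx i).2
      · exact (hx i).1 j
    have hl1 : ∀ i, ∑ k, lam i k = 1 := by
      intro i
      rw [Fintype.sum_option]
      simp [hlam]
    have hcol : ∀ j, ∑ i, x i j = (b j : ℝ) := by
      intro j
      have := congrFun hxs j
      rw [Finset.sum_apply] at this
      rw [this, hab j]
    have hlc : ∀ k, ∑ i, lam i k = (n k : ℝ) := by
      rintro (_ | j)
      · have : ∑ i, lam i none = (p : ℝ) - ∑ j, (b j : ℝ) := by
          simp only [hlam, Option.elim]
          rw [Finset.sum_sub_distrib, Finset.sum_const, Finset.card_univ, Fintype.card_fin,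
            nsmul_eq_mul, mul_one, Finset.sum_comm]
          congr 1
          exact Finset.sum_congr rfl fun j _ => hcol j
        rw [this, hn]
        simp [Nat.cast_sub hsum_le]
      · simpa [hlam, hn] using hcol j
    have hzero : ∀ i k, n k = 0 → lam i k = 0 := by
      intro i k hk
      have hs : ∑ i, lam i k = 0 := by rw [hlc k, hk, Nat.cast_zero]
      exact (Finset.sum_eq_zero_iff_of_nonneg fun i _ => hl0 i k).1 hs i (Finset.mem_univ i)
    -- expand `l i (x i)` as a convex combination of vertex values
    have hxrep : ∀ i, l i (x i) = ∑ k, lam i k * M i k := by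
      intro i
      have hxeq : x i = ∑ k, lam i k • V k := by
        funext j
        rw [Finset.sum_apply]
        simp only [Pi.smul_apply, smul_eq_mul]
        rw [Fintype.sum_option]
        simp [hlam, hV, Pi.single_apply, mul_ite]
      have h1 : x i = Finset.univ.affineCombination ℝ V (lam i) := by
        rw [Finset.affineCombination_eq_linear_combination _ _ _ (hl1 i)]
        exact hxeq
      rw [h1, Finset.map_affineCombination _ _ _ (hl1 i),
        Finset.affineCombination_eq_linear_combination _ _ _ (hl1 i)]
      simp [hM, Function.comp]
    -- the doubly stochastic matrix
    set D : Matrix (Fin p) (Fin p) ℝ := fun i t => lam i (g t) / (n (g t) : ℝ) with hD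
    have hfib : ∀ (f : Option (Fin q) → ℝ), ∑ t, f (g t) = ∑ k, (n k : ℝ) * f k := by
      intro f
      rw [← Finset.sum_fiberwise' Finset.univ g f]
      refine Finset.sum_congr rfl fun k _ => ?_
      rw [Finset.sum_const, hg k, nsmul_eq_mul]
    have hcollapse : ∀ (i : Fin p) (f : Option (Fin q) → ℝ),
        ∑ k, (n k : ℝ) * (lam i k / (n k : ℝ) * f k) = ∑ k, lam i k * f k := by
      intro i f
      refine Finset.sum_congr rfl fun k _ => ?_
      by_cases hk : n k = 0
      · simp [hk, hzero i k hk]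
      · field_simp
    have hDmem : D ∈ doublyStochastic ℝ (Fin p) := by
      rw [mem_doublyStochastic_iff_sum]
      refine ⟨fun i t => div_nonneg (hl0 _ _) (Nat.cast_nonneg _), fun i => ?_, fun t => ?_⟩
      · have := hfib (fun k => lam i k / (n k : ℝ))
        simp only [hD]
        rw [this]
        have := hcollapse i (fun _ => 1)
        simp only [mul_one] at this
        rw [this, hl1 i]
      · simp only [hD]
        rw [← Finset.sum_div, hlc (g t), div_self]
        exact_mod_cast (hgpos t).ne'
    obtain ⟨w, hw0, hw1, hwD⟩ := exists_eq_sum_perm_of_mem_doublyStochastic hDmem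
    have hDentry : ∀ i t, D i t = ∑ σ : Equiv.Perm (Fin p),
        w σ * (if σ i = t then 1 else 0) := by
      intro i t
      have := congrFun (congrFun hwD.symm i) t
      simpa [Matrix.sum_apply, Equiv.Perm.permMatrix, PEquiv.toMatrix_apply,
        Equiv.toPEquiv_apply, mul_ite] using this
    -- put it all together
    have key : ∑ i, l i (x i) = ∑ σ : Equiv.Perm (Fin p), w σ * ∑ i, M i (g (σ i)) := by
      calc ∑ i, l i (x i) = ∑ i, ∑ k, lam i k * M i k :=
            Finset.sum_congr rfl fun i _ => hxrep i
        _ = ∑ i, ∑ t, D i t * M i (g t) := by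
            refine Finset.sum_congr rfl fun i _ => ?_
            rw [hfib (fun k => lam i k / (n k : ℝ) * M i k), hcollapse i (fun k => M i k)]
        _ = ∑ i, ∑ t, ∑ σ : Equiv.Perm (Fin p),
              w σ * (if σ i = t then 1 else 0) * M i (g t) := by
            refine Finset.sum_congr rfl fun i _ => Finset.sum_congr rfl fun t _ => ?_
            rw [hDentry i t, Finset.sum_mul]
        _ = ∑ σ : Equiv.Perm (Fin p), ∑ i, ∑ t,
              w σ * (if σ i = t then 1 else 0) * M i (g t) := by
            calc ∑ i, ∑ t, ∑ σ : Equiv.Perm (Fin p), w σ * (if σ i = t then 1 else 0) * M i (g t)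
                = ∑ i, ∑ σ : Equiv.Perm (Fin p), ∑ t,
                    w σ * (if σ i = t then 1 else 0) * M i (g t) :=
                  Finset.sum_congr rfl fun i _ => Finset.sum_comm
              _ = _ := Finset.sum_comm
        _ = ∑ σ : Equiv.Perm (Fin p), w σ * ∑ i, M i (g (σ i)) := by
            refine Finset.sum_congr rfl fun σ _ => ?_
            rw [Finset.mul_sum]
            refine Finset.sum_congr rfl fun i _ => ?_
            simp [mul_ite, ite_mul]
    have hTle : ∀ σ : Equiv.Perm (Fin p),
        ∑ i, M i (g (σ i)) ≤ ∑ i, M i (g (σ₀ i)) := fun σ => hσ₀ σ (Finset.mem_univ σ)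
    calc ∑ i, l i (x i) = ∑ σ : Equiv.Perm (Fin p), w σ * ∑ i, M i (g (σ i)) := key
      _ ≤ ∑ σ : Equiv.Perm (Fin p), w σ * ∑ i, M i (g (σ₀ i)) :=
          Finset.sum_le_sum fun σ _ => mul_le_mul_of_nonneg_left (hTle σ) (hw0 σ)
      _ = ∑ i, M i (g (σ₀ i)) := by rw [← Finset.sum_mul, hw1, one_mul]
end

section
/- Let $\Delta_{i,j} \subset \mathbb{R}^m$ be convex polyhedra, all with the same support cone, for $i = 1, \ldots, n$ and $j = 1, \ldots, p$. For each $j$, let $\Delta_{1,j} * \cdots * \Delta_{n,j} \subset \mathbb{R}^{n-1} \oplus \mathbb{R}^m$ denote the prism: the convex hull of $\bigcup_{i=1}^n \{b_i\} \times \Delta_{i,j}$ where $b_1, \ldots, b_n$ are the vertices of the standard simplex in $\mathbb{R}^{n-1}$ (say $b_1 = 0$, $b_i = e_{i-1}$). Then for every $n$-tuple of non-negative integers $a_1, \ldots, a_n$ with $a_1 + \cdots + a_n = p$, the slice of the Minkowski sum of the prisms by the plane $\{(a_1,\ldots,a_{n-1})\} \times \mathbb{R}^m$ satisfies: $\big(\{(a_1,\ldots,a_{n-1})\}\times\mathbb{R}^m\big)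 \cap \big(\sum_{j=1}^p \Delta_{1,j}*\cdots*\Delta_{n,j}\big) = \{(a_1,\ldots,a_{n-1})\} \times \mathrm{conv}\Big(\bigcup_{J_1 \sqcup \cdots \sqcup J_n = \{1,\ldots,p\},\ |J_i| = a_i} \sum_{i=1}^n \sum_{j \in J_i} \Delta_{i,j}\Big)$. -/
open Pointwise

def dot {m : ℕ} (γ x : Fin m → ℝ) : ℝ := ∑ j, γ j * x j

/-- A (possibly unbounded) convex polyhedron. -/
def IsPolyhedron {m : ℕ} (N : Set (Fin m → ℝ)) : Prop :=
  ∃ (k : ℕ) (f : Fin k → (Fin m → ℝ)) (c : Fin k → ℝ), N = {x | ∀ i, c i ≤ dot (f i) x}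

def supportCone {m : ℕ} (N : Set (Fin m → ℝ)) : Set (Fin m → ℝ) :=
  {γ | BddBelow ((fun x => dot γ x) '' N)}

/-- The vertices `b₁ = 0, b₂ = e₁, …, bₙ = e_{n-1}` of the standard simplex in `ℝ^{n-1}`. -/
def simpVert (n' : ℕ) : Fin (n' + 1) → (Fin n' → ℝ) :=
  Fin.cases 0 (fun j => Pi.single j (1 : ℝ))

/-- The prism `Δ₁ * ⋯ * Δₙ = conv(⋃ᵢ {bᵢ} × Δᵢ) ⊆ ℝ^{n-1} ⊕ ℝ^m`. -/
def prism {n' m : ℕ} (Δ : Fin (n' + 1) → Set (Fin m → ℝ)) :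
    Set ((Fin n' → ℝ) × (Fin m → ℝ)) :=
  convexHull ℝ (⋃ i, ({simpVert n' i} : Set (Fin n' → ℝ)) ×ˢ Δ i)

/-! A point of `∑ⱼ Δ_{1,j} * ⋯ * Δ_{n,j}` is `∑ⱼ ∑ᵢ tⱼᵢ • (bᵢ, zⱼᵢ)` with `zⱼᵢ ∈ Δᵢⱼ` and every
row `tⱼ` a probability vector. Over the point `∑ᵢ aᵢ bᵢ`, affine independence of the `bᵢ` forces the
column sums of `t` to be the `aᵢ`. By Birkhoff–von Neumann such a matrix is a convex combination
of the 0/1 matrices of assignments `f : {1,…,p} → {1,…,n}` with fibres of sizes `aᵢ`, i.e. of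
ordered partitions, and the linear map `t ↦ ∑ⱼ ∑ᵢ tⱼᵢ • zⱼᵢ` sends the matrix of `f` into
`∑ⱼ Δ_{f j, j}`. Conversely these sums lie in the slice, which is convex. -/

open Finset

section ConvexHull

variable {E : Type*} [AddCommGroup E] [Module ℝ E]

theorem exists_sum_smul_eq_of_mem_convexHull_iUnion {ι : Type*} [Fintype ι] {A : ι → Set E}
    (hA : ∀ i, Convex ℝ (A i)) (hne : ∀ i, (A i).Nonempty) {x : E}
    (hx : x ∈ convexHull ℝ (⋃ i, A i)) :
    ∃ t ∈ stdSimplex ℝ ι, ∃ z : ι → E, (∀ i, z i ∈ A i) ∧ ∑ i, t i • z i = x := by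
  classical
  refine convexHull_min (t := {x | ∃ t ∈ stdSimplex ℝ ι, ∃ z : ι → E,
    (∀ i, z i ∈ A i) ∧ ∑ i, t i • z i = x}) ?_ ?_ hx
  · refine Set.iUnion_subset fun i y hy => ?_
    choose z₀ hz₀ using hne
    refine ⟨Pi.single i 1, single_mem_stdSimplex ℝ i, Function.update z₀ i y, fun k => ?_, ?_⟩
    · rcases eq_or_ne k i with rfl | hk
      · simpa using hy
      · simpa [hk] using hz₀ k
    · simp [Pi.single_apply]
  · rintro _ ⟨t, ht, z, hz, rfl⟩ _ ⟨s, hs, w, hw, rfl⟩ α β hα hβ hαβ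
    have hcombo : ∀ i, ∃ v ∈ A i,
        (α * t i + β * s i) • v = (α * t i) • z i + (β * s i) • w i := fun i =>
      (hA i).exists_mem_add_smul_eq (hz i) (hw i)
        (mul_nonneg hα (ht.1 i)) (mul_nonneg hβ (hs.1 i))
    choose v hv hveq using hcombo
    refine ⟨α • t + β • s, convex_stdSimplex ℝ ι ht hs hα hβ hαβ, v, hv, ?_⟩
    simp only [Pi.add_apply, Pi.smul_apply, smul_eq_mul, hveq, sum_add_distrib,
      smul_sum, mul_smul]

theorem Convex.prodMk_preimage {F : Type*} [AddCommGroup F] [Module ℝ F] {S : Set (E × F)}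
    (hS : Convex ℝ S) (x : E) : Convex ℝ (Prod.mk x ⁻¹' S) :=
  hS.affine_preimage ((AffineMap.const ℝ F x).prod (AffineMap.id ℝ F))

end ConvexHull

section Assignments

variable {ι κ : Type*}

theorem card_filter_fst_equiv_eq [Fintype κ] [DecidableEq ι] (a : ι → ℕ)
    (g : κ ≃ (i : ι) × Fin (a i)) (i : ι) : #{j | (g j).1 = i} = a i := by
  rw [← Fintype.card_subtype, Fintype.card_congr ((g.subtypeEquiv fun _ => Iff.rfl).trans
    (Equiv.sigmaSubtype i)), Fintype.card_fin]

theorem sum_comp_eq_sum_card_fiber_nsmul [Fintype ι] [DecidableEq ι] [Fintype κ]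
    {M : Type*} [AddCommMonoid M] (f : κ → ι) (b : ι → M) :
    ∑ j, b (f j) = ∑ i, #{j | f j = i} • b i := by
  simp_rw [← sum_fiberwise' univ f b, sum_const]

theorem sum_sum_fiber_eq_sum [Fintype ι] [DecidableEq ι] [Fintype κ]
    {M : Type*} [AddCommMonoid M] (f : κ → ι) (D : ι → κ → M) :
    ∑ i, ∑ j ∈ {j | f j = i}, D i j = ∑ j, D (f j) j := by
  rw [← sum_fiberwise univ f fun j => D (f j) j]
  exact sum_congr rfl fun i _ =>
    sum_congr rfl fun j hj => by rw [(mem_filter.1 hj).2]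

theorem iUnion_partitions_eq_iUnion_assignments [Fintype ι] [DecidableEq ι] [Fintype κ]
    {M : Type*} [AddCommMonoid M] (a : ι → ℕ) (D : ι → κ → Set M) :
    ⋃ J ∈ {J : ι → Finset κ | (Pairwise fun i i' => Disjoint (J i) (J i')) ∧
        (∀ j, ∃ i, j ∈ J i) ∧ ∀ i, (J i).card = a i}, ∑ i, ∑ j ∈ J i, D i j
      = ⋃ f ∈ {f : κ → ι | ∀ i, #{j | f j = i} = a i}, ∑ j, D (f j) j := by
  ext y
  simp only [Set.mem_iUnion, Set.mem_ofPred_eq, exists_prop]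
  constructor
  · rintro ⟨J, ⟨hdisj, hcover, hcard⟩, hy⟩
    choose f hf using hcover
    have hJ : J = fun i => ({j | f j = i} : Finset κ) := by
      ext i j
      simp only [mem_filter, mem_univ, true_and]
      refine ⟨fun hj => ?_, fun h => h ▸ hf j⟩
      by_contra hne
      exact disjoint_left.1 (hdisj hne) (hf j) hj
    subst hJ
    exact ⟨f, hcard, by rwa [sum_sum_fiber_eq_sum] at hy⟩
  · rintro ⟨f, hf, hy⟩
    refine ⟨fun i => ({j | f j = i} : Finset κ), ⟨fun i i' hii' => ?_, fun j => ⟨f j, by simp⟩, hf⟩,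
      by rwa [sum_sum_fiber_eq_sum]⟩
    exact disjoint_filter.2 fun j _ hi hi' => hii' (hi.symm.trans hi')

variable [Fintype ι] [Fintype κ]

theorem sum_eq_card_of_forall_mem_stdSimplex {a : ι → ℕ} {t : κ → ι → ℝ}
    (ht : ∀ j, t j ∈ stdSimplex ℝ ι) (hcol : ∀ i, ∑ j, t j i = a i) :
    ∑ i, a i = Fintype.card κ := by
  have : (∑ i, a i : ℝ) = Fintype.card κ := by
    simp_rw [← hcol]
    rw [sum_comm]
    simp [fun j => (ht j).2]
  exact_mod_cast this

/-- Splitting column `i` into `a i` equal columns turns `t` into a doubly stochastic matrix;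
Birkhoff's theorem decomposes it into permutation matrices, and merging the columns back
turns each permutation into an assignment. -/
theorem mem_convexHull_assignments [DecidableEq ι] [DecidableEq κ] {a : ι → ℕ}
    {t : κ → ι → ℝ} (ht : ∀ j, t j ∈ stdSimplex ℝ ι) (hcol : ∀ i, ∑ j, t j i = a i) :
    t ∈ convexHull ℝ ((fun f j => Pi.single (f j) 1) ''
      {f : κ → ι | ∀ i, #{j | f j = i} = a i}) := by
  set S := (i : ι) × Fin (a i)
  have hcard : Fintype.card κ = Fintype.card S := by
    simp [S, sum_eq_card_of_forall_mem_stdSimplex ht hcol]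
  let e : κ ≃ S := Fintype.equivOfCardEq hcard
  let merge : Matrix S S ℝ →ₗ[ℝ] κ → ι → ℝ :=
    { toFun M j i := ∑ k : Fin (a i), M ⟨i, k⟩ (e j)
      map_add' M N := by ext; simp [sum_add_distrib]
      map_smul' c M := by ext; simp [mul_sum] }
  let split : Matrix S S ℝ := fun s r => t (e.symm r) s.1 / a s.1
  have hblock : ∀ j i, ∑ _k : Fin (a i), t j i / a i = t j i := by
    intro j i
    rcases Nat.eq_zero_or_pos (a i) with ha | ha
    · have hcol0 : ∑ j, t j i = 0 := by rw [hcol, ha, Nat.cast_zero]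
      simp [ha, (sum_eq_zero_iff_of_nonneg fun j _ => (ht j).1 i).1 hcol0 j]
    · simp [mul_div_cancel₀ (t j i) (Nat.cast_ne_zero.2 ha.ne' : (a i : ℝ) ≠ 0)]
  have hsplit : split ∈ doublyStochastic ℝ S := by
    rw [mem_doublyStochastic_iff_sum]
    refine ⟨fun s r => div_nonneg ((ht _).1 _) (Nat.cast_nonneg _), fun s => ?_, fun r => ?_⟩
    · have hpos : (0 : ℝ) < a s.1 := by exact_mod_cast s.2.pos
      rw [← sum_div, e.symm.sum_comp (fun j => t j s.1), hcol, div_self hpos.ne']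
    · rw [← (ht (e.symm r)).2, ← univ_sigma_univ, sum_sigma]
      exact sum_congr rfl fun i _ => hblock _ i
  have hmerge_split : merge split = t := by
    ext j i
    simpa [merge, split] using hblock j i
  have hmerge_perm : ∀ σ : Equiv.Perm S, merge (σ.permMatrix ℝ) =
      fun j => Pi.single (σ.symm (e j)).1 1 := by
    intro σ
    ext j i
    obtain ⟨i', k', hs⟩ : ∃ i' k', σ.symm (e j) = ⟨i', k'⟩ := ⟨_, _, rfl⟩
    have hσ : ∀ k, σ ⟨i, k⟩ = e j ↔ (⟨i, k⟩ : S) = ⟨i', k'⟩ := fun k => by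
      rw [← hs, Equiv.eq_symm_apply]
    rcases eq_or_ne i i' with rfl | hi
    · simp [merge, hs, hσ]
    · simp [merge, hs, hσ, hi]
  have hmem := Set.mem_image_of_mem merge (SetLike.mem_coe.2 hsplit)
  rw [doublyStochastic_eq_convexHull_permMatrix, merge.image_convexHull, hmerge_split] at hmem
  refine convexHull_mono ?_ hmem
  rintro _ ⟨_, ⟨σ, rfl⟩, rfl⟩
  exact ⟨fun j => (σ.symm (e j)).1, card_filter_fst_equiv_eq a (e.trans σ.symm),
    (hmerge_perm σ).symm⟩

end Assignments

section Prism

variable {n' m : ℕ}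

theorem sum_smul_simpVert_apply (c : Fin (n' + 1) → ℝ) (k : Fin n') :
    (∑ i, c i • simpVert n' i) k = c k.succ := by
  simp [Fin.sum_univ_succ, simpVert, Pi.single_apply]

theorem eq_of_sum_smul_simpVert_eq {c c' : Fin (n' + 1) → ℝ} (hsum : ∑ i, c i = ∑ i, c' i)
    (h : ∑ i, c i • simpVert n' i = ∑ i, c' i • simpVert n' i) : c = c' := by
  have hsucc : ∀ k : Fin n', c k.succ = c' k.succ := fun k => by
    simpa only [sum_smul_simpVert_apply] using congrFun h k
  have hzero : c 0 = c' 0 := by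
    simpa only [Fin.sum_univ_succ, hsucc, add_left_inj] using hsum
  exact funext (Fin.cases hzero hsucc)

theorem exists_of_mem_prism {Δ : Fin (n' + 1) → Set (Fin m → ℝ)} (hconv : ∀ i, Convex ℝ (Δ i))
    (hne : ∀ i, (Δ i).Nonempty) {q : (Fin n' → ℝ) × (Fin m → ℝ)} (hq : q ∈ prism Δ) :
    ∃ t ∈ stdSimplex ℝ (Fin (n' + 1)), ∃ z : Fin (n' + 1) → Fin m → ℝ, (∀ i, z i ∈ Δ i) ∧
      ∑ i, t i • simpVert n' i = q.1 ∧ ∑ i, t i • z i = q.2 := by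
  obtain ⟨t, ht, w, hw, rfl⟩ := exists_sum_smul_eq_of_mem_convexHull_iUnion
    (fun i => (convex_singleton _).prod (hconv i))
    (fun i => (Set.singleton_nonempty _).prod (hne i)) hq
  refine ⟨t, ht, fun i => (w i).2, fun i => (hw i).2, ?_, by simp [Prod.snd_sum]⟩
  simp [Prod.fst_sum, Set.mem_singleton_iff.1 (hw _).1]

variable {p : ℕ} {Δ : Fin (n' + 1) → Fin p → Set (Fin m → ℝ)} {a : Fin (n' + 1) → ℕ}

theorem mem_convexHull_of_mk_mem_sum_prism (hconv : ∀ i j, Convex ℝ (Δ i j))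
    (hne : ∀ i j, (Δ i j).Nonempty) (ha : ∑ i, a i = p) {y : Fin m → ℝ}
    (hy : (∑ i, (a i : ℝ) • simpVert n' i, y) ∈ ∑ j, prism (fun i => Δ i j)) :
    y ∈ convexHull ℝ (⋃ f ∈ {f : Fin p → Fin (n' + 1) | ∀ i, #{j | f j = i} = a i},
      ∑ j, Δ (f j) j) := by
  obtain ⟨g, hg, hgsum⟩ := (Set.mem_fintype_sum _ _).1 hy
  choose t ht z hz hfst hsnd using fun j => exists_of_mem_prism (hconv · j) (hne · j) (hg j)
  have hcol : (fun i => ∑ j, t j i) = fun i => (a i : ℝ) := by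
    refine eq_of_sum_smul_simpVert_eq ?_ ?_
    · rw [sum_comm]
      simp [fun j => (ht j).2, ← ha]
    · simp_rw [sum_smul]
      rw [sum_comm]
      simp_rw [hfst, ← Prod.fst_sum, hgsum]
  let L : (Fin p → Fin (n' + 1) → ℝ) →ₗ[ℝ] Fin m → ℝ :=
    ∑ j, ∑ i, ((LinearMap.proj i : (Fin (n' + 1) → ℝ) →ₗ[ℝ] ℝ) ∘ₗ
      (LinearMap.proj j : (Fin p → Fin (n' + 1) → ℝ) →ₗ[ℝ] _)).smulRight (z j i)
  have hLt : L t = y := by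
    simp [L, hsnd, ← Prod.snd_sum, hgsum]
  have hLf : ∀ f : Fin p → Fin (n' + 1), L (fun j => Pi.single (f j) 1) = ∑ j, z j (f j) := by
    intro f
    simp [L, Pi.single_apply]
  have hmem := Set.mem_image_of_mem L (mem_convexHull_assignments ht (congrFun hcol))
  rw [L.image_convexHull, hLt] at hmem
  refine convexHull_mono ?_ hmem
  rintro _ ⟨_, ⟨f, hf, rfl⟩, rfl⟩
  exact Set.mem_biUnion hf
    (hLf f ▸ Set.finsetSum_mem_finsetSum _ _ _ fun j _ => hz j (f j))

theorem mk_mem_sum_prism_of_mem_sum {f : Fin p → Fin (n' + 1)} (hf : ∀ i, #{j | f j = i} = a i)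
    {y : Fin m → ℝ} (hy : y ∈ ∑ j, Δ (f j) j) :
    (∑ i, (a i : ℝ) • simpVert n' i, y) ∈ ∑ j, prism (fun i => Δ i j) := by
  obtain ⟨z, hz, rfl⟩ := (Set.mem_fintype_sum _ _).1 hy
  have hpoint : (∑ i, (a i : ℝ) • simpVert n' i, ∑ j, z j) = ∑ j, (simpVert n' (f j), z j) := by
    refine Prod.ext ?_ (by simp [Prod.snd_sum])
    simp [Prod.fst_sum, sum_comp_eq_sum_card_fiber_nsmul f, hf, Nat.cast_smul_eq_nsmul]
  rw [hpoint]
  exact Set.finsetSum_mem_finsetSum _ _ _ fun j _ =>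
    subset_convexHull ℝ _ (Set.mem_iUnion.2 ⟨f j, Set.mk_mem_prod rfl (hz j)⟩)

end Prism

theorem stmt12_general (n' m p : ℕ)
    (Δ : Fin (n' + 1) → Fin p → Set (Fin m → ℝ))
    (hpoly : ∀ i j, IsPolyhedron (Δ i j) ∧ Convex ℝ (Δ i j) ∧ (Δ i j).Nonempty)
    (a : Fin (n' + 1) → ℕ) (ha : ∑ i, a i = p) :
    (({(∑ i, (a i : ℝ) • simpVert n' i)} : Set (Fin n' → ℝ)) ×ˢ (Set.univ : Set (Fin m → ℝ)))
        ∩ (∑ j, prism (fun i => Δ i j))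
      = ({(∑ i, (a i : ℝ) • simpVert n' i)} : Set (Fin n' → ℝ)) ×ˢ
          convexHull ℝ (⋃ J ∈ {J : Fin (n' + 1) → Finset (Fin p) |
              (Pairwise fun i i' => Disjoint (J i) (J i')) ∧
              (∀ j₀ : Fin p, ∃ i, j₀ ∈ J i) ∧ (∀ i, (J i).card = a i)},
            ∑ i, ∑ j ∈ J i, Δ i j) := by
  rw [iUnion_partitions_eq_iUnion_assignments]
  ext ⟨x, y⟩
  simp only [Set.mem_inter_iff, Set.mem_prod, Set.mem_singleton_iff, Set.mem_univ, and_true]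
  refine ⟨fun ⟨hx, hy⟩ => ⟨hx, ?_⟩, fun ⟨hx, hy⟩ => ⟨hx, ?_⟩⟩ <;> subst hx
  · exact mem_convexHull_of_mk_mem_sum_prism (fun i j => (hpoly i j).2.1)
      (fun i j => (hpoly i j).2.2) ha hy
  · have hconv : Convex ℝ (∑ j, prism (fun i => Δ i j)) :=
      convex_sum _ fun j _ => convex_convexHull ℝ _
    exact convexHull_min (Set.iUnion₂_subset fun f hf y hy => mk_mem_sum_prism_of_mem_sum hf hy)
      (hconv.prodMk_preimage _) hy

/-- **Slices of Minkowski sums of prisms** (final lemma in the proof of Theorem 1.7).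
If all `Δ_{i,j}` have the same support cone, then for non-negative integers
`a₁ + ⋯ + aₙ = p`, the slice of `∑ⱼ Δ_{1,j} * ⋯ * Δ_{n,j}` by the plane
`{∑ᵢ aᵢ bᵢ} × ℝ^m` equals `{∑ᵢ aᵢ bᵢ} × conv(⋃ ∑_{i, j ∈ Jᵢ} Δ_{i,j})`, the union over
ordered partitions `J₁ ⊔ ⋯ ⊔ Jₙ = {1,…,p}` with `|Jᵢ| = aᵢ`. -/
theorem stmt12 (n' m p : ℕ)
    (Δ : Fin (n' + 1) → Fin p → Set (Fin m → ℝ))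
    (hpoly : ∀ i j, IsPolyhedron (Δ i j) ∧ Convex ℝ (Δ i j) ∧ (Δ i j).Nonempty)
    (Γ : Set (Fin m → ℝ)) (hcone : ∀ i j, supportCone (Δ i j) = Γ)
    (a : Fin (n' + 1) → ℕ) (ha : ∑ i, a i = p) :
    (({(∑ i, (a i : ℝ) • simpVert n' i)} : Set (Fin n' → ℝ)) ×ˢ (Set.univ : Set (Fin m → ℝ)))
        ∩ (∑ j, prism (fun i => Δ i j))
      = ({(∑ i, (a i : ℝ) • simpVert n' i)} : Set (Fin n' → ℝ)) ×ˢ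
          convexHull ℝ (⋃ J ∈ {J : Fin (n' + 1) → Finset (Fin p) |
              (Pairwise fun i i' => Disjoint (J i) (J i')) ∧
              (∀ j₀ : Fin p, ∃ i, j₀ ∈ J i) ∧ (∀ i, (J i).card = a i)},
            ∑ i, ∑ j ∈ J i, Δ i j) :=
  stmt12_general n' m p Δ hpoly a ha
end
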